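/- arXiv:math/0504191 — 6 statements merged into one kernel-verified Lean document; each statement's English description precedes it below -/
import Mathlib

section
/- Ping-Pong Lemma: Let G be a group acting on a set X, let g₁, g₂ ∈ G, and let X₁, X₂ ⊆ X be nonempty disjoint subsets such that for every nonzero integer n and all i, j ∈ {1,2} with i ≠ j one has g_iⁿ(X_j) ⊆ X_i. Then the subgroup generated by g₁ and g₂ is free with basis {g₁, g₂}. -/
/-!
The free group on the generators is the free product of copies of `FreeGroup Unit ≃ ℤ`, and the
nontrivial elements of the copy indexed by `i` map to the nonzero powers of the `i`-th generator.
So the theorem is the ping-pong lemma for free products, whose extra requirement in the case of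
two factors, a factor with at least three elements, holds because `ℤ` is infinite.
-/

open Pointwise
open scoped Function

namespace FreeGroup

theorem lift_eq_coprodI_lift_comp {ι G : Type*} [Group G] (a : ι → G) :
    lift a = (Monoid.CoprodI.lift fun i => lift fun _ : Unit => a i).comp
      freeGroupEquivCoprodI.toMonoidHom := by
  ext i
  simp

theorem injective_lift_of_ping_pong_zpow {ι G α : Type*} [Nontrivial ι] [Group G] [MulAction G α]
    (a : ι → G) (X : ι → Set α) (hne : ∀ i, (X i).Nonempty) (hdisj : Pairwise (Disjoint on X))
    (hpp : Pairwise fun i j => ∀ n : ℤ, n ≠ 0 → a i ^ n • X j ⊆ X i) :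
    Function.Injective (lift a) := by
  obtain ⟨k⟩ : Nonempty ι := inferInstance
  have h3 : 3 ≤ Cardinal.mk (FreeGroup Unit) :=
    (Cardinal.natCast_lt_aleph0 (n := 3)).le.trans (Cardinal.aleph0_le_mk _)
  rw [lift_eq_coprodI_lift_comp, MonoidHom.coe_comp]
  refine Function.Injective.comp ?_ freeGroupEquivCoprodI.injective
  refine Monoid.CoprodI.lift_injective_of_ping_pong _ (.inr ⟨k, h3⟩)
    X hne hdisj fun i j hij => freeGroupUnitEquivInt.forall_congr_left.mpr fun n hn => ?_
  have hn0 : n ≠ 0 := by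
    rintro rfl
    exact hn (zpow_zero _)
  simpa [freeGroupUnitEquivInt] using hpp hij n hn0

end FreeGroup

/-- **Ping-Pong Lemma.** Let `G` be a group acting on a set `X`, let `g₁ g₂ : G`, and let
`X₁, X₂ ⊆ X` be nonempty disjoint subsets such that for every nonzero integer `n`,
`g₁ ^ n` maps `X₂` into `X₁` and `g₂ ^ n` maps `X₁` into `X₂`. Then the subgroup generated
by `g₁` and `g₂` is free with basis `{g₁, g₂}`, i.e. the homomorphism from the free group
on two generators sending the generators to `g₁` and `g₂` is injective. -/
theorem pingPongLemma {G X : Type*} [Group G] [MulAction G X] (g₁ g₂ : G)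
    (X₁ X₂ : Set X) (hne₁ : X₁.Nonempty) (hne₂ : X₂.Nonempty)
    (hdisj : Disjoint X₁ X₂)
    (h₁ : ∀ n : ℤ, n ≠ 0 → (g₁ ^ n) • X₂ ⊆ X₁)
    (h₂ : ∀ n : ℤ, n ≠ 0 → (g₂ ^ n) • X₁ ⊆ X₂) :
    Function.Injective ⇑(FreeGroup.lift ![g₁, g₂]) := by
  refine FreeGroup.injective_lift_of_ping_pong_zpow _ ![X₁, X₂] ?_ ?_ ?_
  · simp [Fin.forall_fin_two, hne₁, hne₂]
  · intro i j hij
    fin_cases i <;> fin_cases j <;> simp_all [Function.onFun, hdisj.symm]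
  · intro i j hij
    fin_cases i <;> fin_cases j <;> simp_all
end

section
/- Let G be a group acting on a set X and let g₁, g₂ ∈ G. For i = 1, 2 let A_i ⊆ X, let B_i ⊆ A_i, and let p_i : X → X be a map with p_i(x) ∈ A_i for all x ∈ X; set X_i := p_i⁻¹(A_i \ B_i). Assume: (1) X₁ and X₂ are nonempty and X₁ ∩ X₂ = ∅; (2) for i = 1, 2 and every nonzero integer n, g_iⁿ(p_i⁻¹(B_i)) ⊆ X_i. Then for every nonzero integer n and all i ≠ j one has g_iⁿ(X_j) ⊆ X_i, and consequently the subgroup generated by g₁ and g₂ is free with basis {g₁, g₂}. -/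
open Pointwise

/-!
If `x ∈ X₂` then `x ∉ X₁`, and since `p₁ x ∈ A₁` always, this forces `p₁ x ∈ B₁`; so
`X₂ ⊆ p₁⁻¹(B₁)` and hypothesis (2) gives `g₁ⁿ • X₂ ⊆ X₁`, and symmetrically. These are the
hypotheses of the ping-pong lemma for the free product `ℤ ∗ ℤ`, which is the free group on two
generators; the lemma applies with only two factors because `ℤ` has at least three elements.
-/

theorem Set.subset_preimage_of_disjoint_preimage_diff {α β : Type*} {p : α → β} {A B : Set β}
    {Y : Set α} (hp : ∀ x, p x ∈ A) (hY : Disjoint Y (p ⁻¹' (A \ B))) : Y ⊆ p ⁻¹' B := fun x hx ↦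
  of_not_not fun hxB ↦ hY.notMem_of_mem_left hx ⟨hp x, hxB⟩

theorem Fin.pairwise_two_iff {r : Fin 2 → Fin 2 → Prop} : Pairwise r ↔ r 0 1 ∧ r 1 0 := by
  refine ⟨fun h ↦ ⟨h zero_ne_one, h one_ne_zero⟩, fun ⟨h01, h10⟩ i j hij ↦ ?_⟩
  fin_cases i <;> fin_cases j <;> simp_all

theorem FreeGroup.injective_lift_of_zpow_ping_pong {ι G α : Type*} [Nontrivial ι] [Group G]
    [MulAction G α] (a : ι → G) (X : ι → Set α) (hXnonempty : ∀ i, (X i).Nonempty)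
    (hXdisj : Pairwise fun i j ↦ Disjoint (X i) (X j))
    (hpp : Pairwise fun i j ↦ ∀ n : ℤ, n ≠ 0 → a i ^ n • X j ⊆ X i) :
    Function.Injective (FreeGroup.lift a) := by
  have hfactor : FreeGroup.lift a =
      (Monoid.CoprodI.lift fun i ↦ FreeGroup.lift fun _ : Unit ↦ a i).comp
        (freeGroupEquivCoprodI (ι := ι)).toMonoidHom := by
    ext i
    simp
  rw [hfactor, MonoidHom.coe_comp]
  refine .comp (Monoid.CoprodI.lift_injective_of_ping_pong _ ?_ X hXnonempty hXdisj ?_)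
    (MulEquiv.injective _)
  · inhabit ι
    refine .inr ⟨default, ?_⟩
    rw [FreeGroup.freeGroupUnitEquivInt.cardinal_eq, Cardinal.mk_denumerable]
    exact Cardinal.natCast_le_aleph0
  · intro i j hij
    refine FreeGroup.freeGroupUnitEquivInt.forall_congr_left.mpr fun n hn ↦ ?_
    have hn0 : n ≠ 0 := by
      rintro rfl
      exact hn (by simp [FreeGroup.freeGroupUnitEquivInt])
    change FreeGroup.lift (fun _ ↦ a i) (FreeGroup.of () ^ n) • X j ⊆ X i
    rw [map_zpow, FreeGroup.lift_apply_of]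
    exact hpp hij n hn0

theorem pingPong_setup_general {G X : Type*} [Group G] [MulAction G X] (g₁ g₂ : G)
    (A₁ A₂ B₁ B₂ : Set X)
    (p₁ p₂ : X → X) (hp₁ : ∀ x : X, p₁ x ∈ A₁) (hp₂ : ∀ x : X, p₂ x ∈ A₂)
    (X₁ X₂ : Set X) (hX₁ : X₁ = p₁ ⁻¹' (A₁ \ B₁)) (hX₂ : X₂ = p₂ ⁻¹' (A₂ \ B₂))
    (hne₁ : X₁.Nonempty) (hne₂ : X₂.Nonempty) (hdisj : X₁ ∩ X₂ = ∅)
    (h₁ : ∀ n : ℤ, n ≠ 0 → (g₁ ^ n) • (p₁ ⁻¹' B₁) ⊆ X₁)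
    (h₂ : ∀ n : ℤ, n ≠ 0 → (g₂ ^ n) • (p₂ ⁻¹' B₂) ⊆ X₂) :
    (∀ n : ℤ, n ≠ 0 → (g₁ ^ n) • X₂ ⊆ X₁ ∧ (g₂ ^ n) • X₁ ⊆ X₂) ∧
      Function.Injective ⇑(FreeGroup.lift ![g₁, g₂]) := by
  have hD : Disjoint X₁ X₂ := Set.disjoint_iff_inter_eq_empty.mpr hdisj
  have hX₂B₁ : X₂ ⊆ p₁ ⁻¹' B₁ := Set.subset_preimage_of_disjoint_preimage_diff hp₁ (hX₁ ▸ hD.symm)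
  have hX₁B₂ : X₁ ⊆ p₂ ⁻¹' B₂ := Set.subset_preimage_of_disjoint_preimage_diff hp₂ (hX₂ ▸ hD)
  have ping : ∀ n : ℤ, n ≠ 0 → (g₁ ^ n) • X₂ ⊆ X₁ ∧ (g₂ ^ n) • X₁ ⊆ X₂ := fun n hn ↦
    ⟨(Set.smul_set_mono hX₂B₁).trans (h₁ n hn), (Set.smul_set_mono hX₁B₂).trans (h₂ n hn)⟩
  refine ⟨ping, FreeGroup.injective_lift_of_zpow_ping_pong _ ![X₁, X₂] ?_ ?_ ?_⟩
  · simpa [Fin.forall_fin_two] using ⟨hne₁, hne₂⟩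
  · exact Fin.pairwise_two_iff.mpr ⟨hD, hD.symm⟩
  · exact Fin.pairwise_two_iff.mpr ⟨fun n hn ↦ (ping n hn).1, fun n hn ↦ (ping n hn).2⟩

/-- Let `G` act on a set `X` and let `g₁ g₂ : G`. For `i = 1, 2` let `A_i ⊆ X`, `B_i ⊆ A_i`,
and let `p_i : X → X` be a map with `p_i x ∈ A_i` for all `x`; set `X_i := p_i⁻¹(A_i \ B_i)`.
Assume `X₁, X₂` are nonempty and disjoint, and that `g_i ^ n` maps `p_i⁻¹(B_i)` into `X_i`
for every nonzero integer `n`. Then for every nonzero integer `n`, `g₁ ^ n` maps `X₂` into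
`X₁` and `g₂ ^ n` maps `X₁` into `X₂`; consequently the subgroup generated by `g₁, g₂` is
free with basis `{g₁, g₂}` (the homomorphism from the free group on two generators sending
the generators to `g₁` and `g₂` is injective). -/
theorem pingPong_setup {G X : Type*} [Group G] [MulAction G X] (g₁ g₂ : G)
    (A₁ A₂ B₁ B₂ : Set X) (hBA₁ : B₁ ⊆ A₁) (hBA₂ : B₂ ⊆ A₂)
    (p₁ p₂ : X → X) (hp₁ : ∀ x : X, p₁ x ∈ A₁) (hp₂ : ∀ x : X, p₂ x ∈ A₂)
    (X₁ X₂ : Set X) (hX₁ : X₁ = p₁ ⁻¹' (A₁ \ B₁)) (hX₂ : X₂ = p₂ ⁻¹' (A₂ \ B₂))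
    (hne₁ : X₁.Nonempty) (hne₂ : X₂.Nonempty) (hdisj : X₁ ∩ X₂ = ∅)
    (h₁ : ∀ n : ℤ, n ≠ 0 → (g₁ ^ n) • (p₁ ⁻¹' B₁) ⊆ X₁)
    (h₂ : ∀ n : ℤ, n ≠ 0 → (g₂ ^ n) • (p₂ ⁻¹' B₂) ⊆ X₂) :
    (∀ n : ℤ, n ≠ 0 → (g₁ ^ n) • X₂ ⊆ X₁ ∧ (g₂ ^ n) • X₁ ⊆ X₂) ∧
      Function.Injective ⇑(FreeGroup.lift ![g₁, g₂]) :=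
  pingPong_setup_general g₁ g₂ A₁ A₂ B₁ B₂ p₁ p₂ hp₁ hp₂ X₁ X₂ hX₁ hX₂ hne₁ hne₂ hdisj h₁ h₂
end

section
/- Let δ ≥ 0 and let X be a proper geodesic δ-hyperbolic metric space. Let g be an isometry of X and let c : ℝ → X be a geodesic line such that the Hausdorff distance between c(ℝ) and g(c(ℝ)) is at most 2δ and such that there is a constant K with d(g(c(s)), c(s)) ≤ K for all s ∈ ℝ. Suppose x = c(0) satisfies t := d(g(x), x) ≥ 20δ. For each integer i choose t_i ∈ ℝ such that c(t_i) is a nearest-point projection of gⁱ(x) onto c(ℝ). Then for every integer i one has t − 4δ ≤ d(c(t_i), c(t_{i+1})) ≤ t + 4δ, and for every integer n ≥ 1 one has d(c(t_n), c(t_0)) ≥ n·(t − 4δ). -/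
/-- `s` is a geodesic segment from `p` to `q`: the image of a unit-speed (isometric)
parameterization of the interval `[0, dist p q]` sending `0` to `p` and `dist p q` to `q`. -/
def IsGeodesicSegmentBetween {X : Type*} [MetricSpace X] (s : Set X) (p q : X) : Prop :=
  ∃ f : ℝ → X, f 0 = p ∧ f (dist p q) = q ∧ s = f '' Set.Icc 0 (dist p q) ∧
    ∀ u ∈ Set.Icc 0 (dist p q), ∀ v ∈ Set.Icc 0 (dist p q), dist (f u) (f v) = |u - v|

/-- A metric space is geodesic if every pair of points is joined by a geodesic segment. -/
def IsGeodesicSpace (X : Type*) [MetricSpace X] : Prop :=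
  ∀ p q : X, ∃ s : Set X, IsGeodesicSegmentBetween s p q

/-- `δ`-hyperbolicity via `δ`-thin triangles: each side of any geodesic triangle is contained
in the closed `δ`-neighborhood of the union of the other two sides. -/
def DeltaThinTriangles (X : Type*) [MetricSpace X] (δ : ℝ) : Prop :=
  ∀ p q r : X, ∀ s₁ s₂ s₃ : Set X,
    IsGeodesicSegmentBetween s₁ p q → IsGeodesicSegmentBetween s₂ q r →
    IsGeodesicSegmentBetween s₃ p r →
    ∀ x ∈ s₃, Metric.infDist x (s₁ ∪ s₂) ≤ δ

/-- A geodesic line: an isometric embedding `c : ℝ → X`. -/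
def IsGeodesicLine {X : Type*} [MetricSpace X] (c : ℝ → X) : Prop :=
  ∀ s t : ℝ, dist (c s) (c t) = |s - t|

/-- `a` is a nearest-point projection of `x` onto `A`. -/
def IsNearestPointProj {X : Type*} [MetricSpace X] (A : Set X) (x a : X) : Prop :=
  a ∈ A ∧ dist x a = Metric.infDist x A

section Aux

variable {X : Type*} [MetricSpace X]

lemma seg_compact {s : Set X} {p q : X} (h : IsGeodesicSegmentBetween s p q) :
    IsCompact s := by
  obtain ⟨f, h0, hd, heq, hiso⟩ := h
  subst heq
  refine isCompact_Icc.image_of_continuousOn ?_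
  refine (LipschitzOnWith.of_dist_le_mul (K := 1) ?_).continuousOn
  intro u hu v hv
  rw [hiso u hu v hv, NNReal.coe_one, one_mul, Real.dist_eq]

lemma seg_mem_left {s : Set X} {p q : X} (h : IsGeodesicSegmentBetween s p q) : p ∈ s := by
  obtain ⟨f, h0, hd, heq, hiso⟩ := h
  subst heq
  exact ⟨0, ⟨le_rfl, dist_nonneg⟩, h0⟩

lemma seg_dist_add {s : Set X} {p q : X} (h : IsGeodesicSegmentBetween s p q)
    {w : X} (hw : w ∈ s) : dist p w + dist w q = dist p q := by
  obtain ⟨f, h0, hd, heq, hiso⟩ := h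
  subst heq
  obtain ⟨v, hv, rfl⟩ := hw
  have h1 : dist p (f v) = v := by
    rw [← h0, hiso 0 ⟨le_rfl, dist_nonneg⟩ v hv]
    rw [abs_of_nonpos (by linarith [hv.1])]; ring
  have h2 : dist (f v) q = dist p q - v := by
    have h3 := hiso v hv (dist p q) ⟨dist_nonneg, le_rfl⟩
    rw [hd] at h3
    rw [h3, abs_of_nonpos (by linarith [hv.2])]; ring
  rw [h1, h2]; ring

lemma line_seg {c : ℝ → X} (hc : IsGeodesicLine c) {a b : ℝ} (hab : a ≤ b) :
    IsGeodesicSegmentBetween (c '' Set.Icc a b) (c a) (c b) := by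
  have hd : dist (c a) (c b) = b - a := by
    rw [hc, abs_sub_comm, abs_of_nonneg (by linarith)]
  refine ⟨fun u => c (a + u), by simp, ?_, ?_, ?_⟩
  · rw [hd]; norm_num
  · rw [hd, ← Set.image_image c (fun u => a + u), Set.image_const_add_Icc]
    norm_num
  · intro u _ v _
    rw [hc]; congr 1; ring

lemma line_seg_rev {c : ℝ → X} (hc : IsGeodesicLine c) {a b : ℝ} (hab : b ≤ a) :
    IsGeodesicSegmentBetween (c '' Set.Icc b a) (c a) (c b) := by
  have hd : dist (c a) (c b) = a - b := by
    rw [hc, abs_of_nonneg (by linarith)]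
  refine ⟨fun u => c (a - u), by simp, ?_, ?_, ?_⟩
  · rw [hd]; norm_num
  · rw [hd, ← Set.image_image c (fun u => a - u), Set.image_const_sub_Icc]
    norm_num
  · intro u _ v _
    rw [hc]
    rw [show a - u - (a - v) = -(u - v) by ring, abs_neg]

lemma line_seg_any {c : ℝ → X} (hc : IsGeodesicLine c) (s r : ℝ) :
    ∃ seg : Set X, IsGeodesicSegmentBetween seg (c s) (c r) ∧ seg ⊆ Set.range c := by
  rcases le_total s r with h | h
  · exact ⟨c '' Set.Icc s r, line_seg hc h, Set.image_subset_range _ _⟩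
  · exact ⟨c '' Set.Icc r s, line_seg_rev hc h, Set.image_subset_range _ _⟩

lemma line_range_closed {c : ℝ → X} (hc : IsGeodesicLine c) : IsClosed (Set.range c) := by
  have : Isometry c := Isometry.of_dist_eq (fun a b => by rw [hc, Real.dist_eq])
  exact this.isClosedEmbedding.isClosed_range

end Aux

section Aux2

variable {X : Type*} [MetricSpace X] [ProperSpace X]

open Metric

/-- Projection inequality in a `δ`-hyperbolic space. -/
lemma proj_ineq {δ : ℝ} (hδ : 0 ≤ δ) (hgeo : IsGeodesicSpace X)
    (hthin : DeltaThinTriangles X δ) {c : ℝ → X} (hc : IsGeodesicLine c)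
    {y a z : X} (hproj : IsNearestPointProj (Set.range c) y a) (hz : z ∈ Set.range c) :
    dist y a + dist a z - 4 * δ ≤ dist y z := by
  obtain ⟨ha, hda⟩ := hproj
  have key : ∀ ε : ℝ, 0 < ε → dist y a + dist a z ≤ dist y z + 4 * δ + 2 * ε := by
    intro ε hε
    by_cases hsmall : dist y a ≤ δ + ε
    · have h := dist_triangle a y z
      rw [dist_comm a y] at h
      linarith
    push_neg at hsmall
    obtain ⟨sa, rfl⟩ := ha
    obtain ⟨sz, rfl⟩ := hz
    -- the three sides of the triangle (y, z, a)
    obtain ⟨S1, hS1⟩ := hgeo y (c sz)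
    obtain ⟨S2, hS2, hS2sub⟩ := line_seg_any hc sz sa
    obtain ⟨S3, hS3⟩ := hgeo y (c sa)
    obtain ⟨f3, hf30, hf3d, hS3eq, hf3iso⟩ := hS3
    set d := dist y (c sa) with hdd
    -- the point on [y,a] at distance δ+ε from a
    set u := f3 (d - (δ + ε)) with hu
    have hmem : d - (δ + ε) ∈ Set.Icc (0:ℝ) d := ⟨by linarith, by linarith⟩
    have huS3 : u ∈ S3 := by rw [hS3eq]; exact ⟨d - (δ + ε), hmem, rfl⟩
    have hyu : dist y u = d - (δ + ε) := by
      rw [← hf30, hf3iso 0 ⟨le_rfl, by linarith⟩ (d - (δ + ε)) hmem,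
        abs_of_nonpos (by linarith)]
      ring
    have hua : dist u (c sa) = δ + ε := by
      rw [← hf3d, hf3iso (d - (δ + ε)) hmem d ⟨by linarith, le_rfl⟩,
        abs_of_nonpos (by linarith)]
      ring
    have hinf : Metric.infDist u (S1 ∪ S2) ≤ δ :=
      hthin y (c sz) (c sa) S1 S2 S3 hS1 hS2 ⟨f3, hf30, hf3d, hS3eq, hf3iso⟩ u huS3
    have hcomp : IsCompact (S1 ∪ S2) := (seg_compact hS1).union (seg_compact hS2)
    have hne : (S1 ∪ S2).Nonempty := ⟨y, Or.inl (seg_mem_left hS1)⟩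
    obtain ⟨w, hw, hweq⟩ := hcomp.exists_infDist_eq_dist hne u
    have hwdist : dist u w ≤ δ := by rw [← hweq]; exact hinf
    rcases hw with hw | hw
    · -- w on the side [y, z]
      have hsum : dist y w + dist w (c sz) = dist y (c sz) := seg_dist_add hS1 hw
      have h1 : dist y w ≥ dist y u - dist u w := by
        have h := dist_triangle y w u
        rw [dist_comm w u] at h
        linarith
      have h2 : dist u (c sz) ≥ dist (c sa) (c sz) - dist u (c sa) := by
        have := dist_triangle (c sa) u (c sz); rw [dist_comm (c sa) u] at this; linarith
      have h3 : dist w (c sz) ≥ dist u (c sz) - dist u w := by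
        have := dist_triangle u w (c sz); linarith
      have hdd' : dist (c sa) (c sz) ≤ dist u (c sz) + (δ + ε) := by linarith
      linarith
    · -- w on the line: contradiction with minimality
      exfalso
      have : Metric.infDist y (Set.range c) ≤ dist y w :=
        Metric.infDist_le_dist_of_mem (hS2sub hw)
      have hyw : dist y w ≤ dist y u + dist u w := dist_triangle y u w
      rw [← hda] at this
      have : d ≤ d - ε := by
        calc d ≤ dist y w := this
        _ ≤ (d - (δ + ε)) + δ := by rw [hyu] at hyw; linarith
        _ = d - ε := by ring
      linarith
  by_contra hcon
  push_neg at hcon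
  have := key ((dist y a + dist a z - 4 * δ - dist y z) / 4) (by linarith)
  linarith

end Aux2

section Aux3

variable {X : Type*} [MetricSpace X] [ProperSpace X]

open Metric EMetric Set

lemma haus_infDist {δ : ℝ} (hδ : 0 ≤ δ) {A B : Set X}
    (h : EMetric.hausdorffEdist A B ≤ ENNReal.ofReal (2 * δ)) {p : X} (hp : p ∈ B) :
    Metric.infDist p A ≤ 2 * δ := by
  have h1 : EMetric.infEdist p A ≤ ENNReal.ofReal (2 * δ) := by
    calc EMetric.infEdist p A ≤ EMetric.hausdorffEdist B A :=
          EMetric.infEdist_le_hausdorffEdist_of_mem hp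
    _ = EMetric.hausdorffEdist A B := EMetric.hausdorffEdist_comm
    _ ≤ ENNReal.ofReal (2 * δ) := h
  have h2 : (EMetric.infEdist p A).toReal ≤ (ENNReal.ofReal (2 * δ)).toReal :=
    ENNReal.toReal_mono ENNReal.ofReal_ne_top h1
  rwa [ENNReal.toReal_ofReal (by linarith)] at h2

/-- A geodesic line whose points all lie within `H` of the line `c` passes
within `2δ` of `c` (evaluated at the parameter `0`). -/
lemma line_close {δ : ℝ} (hδ : 0 ≤ δ) (hgeo : IsGeodesicSpace X)
    (hthin : DeltaThinTriangles X δ) {c : ℝ → X} (hc : IsGeodesicLine c)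
    {c' : ℝ → X} (hc' : IsGeodesicLine c') {H : ℝ} (hH : 0 ≤ H)
    (hclose : ∀ s : ℝ, Metric.infDist (c' s) (Set.range c) ≤ H) :
    Metric.infDist (c' 0) (Set.range c) ≤ 2 * δ := by
  set R := 2 * δ + H + 1 with hR
  have hR0 : 0 < R := by linarith
  have hcl : IsClosed (Set.range c) := line_range_closed hc
  have hne : (Set.range c).Nonempty := ⟨c 0, Set.mem_range_self 0⟩
  obtain ⟨a, haC, haeq⟩ := hcl.exists_infDist_eq_dist hne (c' (-R))
  obtain ⟨b, hbC, hbeq⟩ := hcl.exists_infDist_eq_dist hne (c' R)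
  have hda : dist (c' (-R)) a ≤ H := by rw [← haeq]; exact hclose (-R)
  have hdb : dist (c' R) b ≤ H := by rw [← hbeq]; exact hclose R
  obtain ⟨as, rfl⟩ := haC
  obtain ⟨bs, rfl⟩ := hbC
  -- first triangle : (c'(-R), a, c'(R))
  have hS3 : IsGeodesicSegmentBetween (c' '' Set.Icc (-R) R) (c' (-R)) (c' R) :=
    line_seg hc' (by linarith)
  obtain ⟨S1, hS1⟩ := hgeo (c' (-R)) (c as)
  obtain ⟨S2, hS2⟩ := hgeo (c as) (c' R)
  have hmem0 : c' 0 ∈ c' '' Set.Icc (-R) R := ⟨0, ⟨by linarith, by linarith⟩, rfl⟩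
  have hinf1 : Metric.infDist (c' 0) (S1 ∪ S2) ≤ δ :=
    hthin (c' (-R)) (c as) (c' R) S1 S2 _ hS1 hS2 hS3 (c' 0) hmem0
  have hcomp1 : IsCompact (S1 ∪ S2) := (seg_compact hS1).union (seg_compact hS2)
  have hne1 : (S1 ∪ S2).Nonempty := ⟨c' (-R), Or.inl (seg_mem_left hS1)⟩
  obtain ⟨w, hw, hweq⟩ := hcomp1.exists_infDist_eq_dist hne1 (c' 0)
  have hwd : dist (c' 0) w ≤ δ := by rw [← hweq]; exact hinf1
  have hRdist : dist (c' 0) (c' (-R)) = R := by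
    rw [hc', show (0:ℝ) - -R = R by ring, abs_of_nonneg hR0.le]
  have hRdist' : dist (c' 0) (c' R) = R := by
    rw [hc', show (0:ℝ) - R = -R by ring, abs_neg, abs_of_nonneg hR0.le]
  rcases hw with hw | hw
  · -- w on short side near c'(-R) : impossible
    exfalso
    have hsum := seg_dist_add hS1 hw
    have h1 : dist (c' (-R)) w ≤ dist (c' (-R)) (c as) := by
      have := dist_nonneg (x := w) (y := c as); linarith
    have h2 := dist_triangle (c' 0) w (c' (-R))
    rw [dist_comm w (c' (-R))] at h2
    rw [hRdist] at h2
    linarith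
  · -- w on [a, c'(R)] : second triangle (a, b, c'(R))
    obtain ⟨S1', hS1', hS1'sub⟩ := line_seg_any hc as bs
    obtain ⟨S2', hS2'⟩ := hgeo (c bs) (c' R)
    have hinf2 : Metric.infDist w (S1' ∪ S2') ≤ δ :=
      hthin (c as) (c bs) (c' R) S1' S2' S2 hS1' hS2' hS2 w hw
    have hcomp2 : IsCompact (S1' ∪ S2') := (seg_compact hS1').union (seg_compact hS2')
    have hne2 : (S1' ∪ S2').Nonempty := ⟨c as, Or.inl (seg_mem_left hS1')⟩
    obtain ⟨v, hv, hveq⟩ := hcomp2.exists_infDist_eq_dist hne2 w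
    have hvd : dist w v ≤ δ := by rw [← hveq]; exact hinf2
    rcases hv with hv | hv
    · -- v on the line c : done
      calc Metric.infDist (c' 0) (Set.range c) ≤ dist (c' 0) v :=
            Metric.infDist_le_dist_of_mem (hS1'sub hv)
      _ ≤ dist (c' 0) w + dist w v := dist_triangle _ _ _
      _ ≤ 2 * δ := by linarith
    · -- v on short side near c'(R) : impossible
      exfalso
      have hsum := seg_dist_add hS2' hv
      have h1 : dist v (c' R) ≤ dist (c bs) (c' R) := by
        have := dist_nonneg (x := c bs) (y := v); linarith
      have h2 : dist (c' 0) (c' R) ≤ dist (c' 0) w + dist w v + dist v (c' R) :=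
        dist_triangle4 _ _ _ _
      rw [hRdist'] at h2
      rw [dist_comm (c bs) (c' R)] at h1
      linarith

end Aux3

section Aux4

variable {X : Type*} [MetricSpace X] [ProperSpace X]

open Metric

/-- If `g` moved `x = c 0` far (to distance `> 12δ` along the line, in the positive
direction) but `g² x` came back close to `x`, then `g` would flip the line, contradicting
the uniform bound `K` on the displacement of points of the line. -/
lemma no_flip {δ K : ℝ} (hδ : 0 ≤ δ) (g : X ≃ᵢ X) {c : ℝ → X} (hc : IsGeodesicLine c)
    (hHaus : EMetric.hausdorffEdist (Set.range c) (⇑g '' Set.range c) ≤ ENNReal.ofReal (2 * δ))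
    (hK : ∀ s : ℝ, dist (g (c s)) (c s) ≤ K)
    {T₁ : ℝ} (hd1 : dist (g (c 0)) (c T₁) ≤ 2 * δ) (hT₁ : 10 * δ < T₁)
    (hgg : dist (g (g (c 0))) (c 0) ≤ 12 * δ) : False := by
  have hK0 : 0 ≤ K := le_trans dist_nonneg (hK 0)
  have hT₁0 : 0 < T₁ := by linarith
  set s := T₁ + 5 * δ + K + 1 with hs
  have hs0 : 0 < s := by linarith
  have hsT : T₁ + 4 * δ < s := by linarith
  -- a point c u within 2δ of g (c s)
  have hcl : IsClosed (Set.range c) := line_range_closed hc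
  have hne : (Set.range c).Nonempty := ⟨c 0, Set.mem_range_self 0⟩
  obtain ⟨p, hpC, hpeq⟩ := hcl.exists_infDist_eq_dist hne (g (c s))
  have hpd : dist (g (c s)) p ≤ 2 * δ := by
    rw [← hpeq]
    exact haus_infDist hδ hHaus ⟨c s, Set.mem_range_self s, rfl⟩
  obtain ⟨u, rfl⟩ := hpC
  -- distances along the line
  have hgs0 : dist (g (c s)) (g (c 0)) = s := by
    rw [g.dist_eq, hc, sub_zero, abs_of_nonneg hs0.le]
  have hgsT : dist (g (c s)) (g (c T₁)) = s - T₁ := by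
    rw [g.dist_eq, hc, abs_of_nonneg (by linarith)]
  -- A1 : |u - T₁| ≥ s - 4δ
  have hA1 : s - 4 * δ ≤ |u - T₁| := by
    have h := dist_triangle4 (g (c s)) (c u) (c T₁) (g (c 0))
    rw [hgs0] at h
    rw [hc u T₁] at h
    rw [dist_comm (c T₁) (g (c 0))] at h
    linarith
  -- A2 : |u| ≤ s - T₁ + 16δ
  have hgT1 : dist (g (c T₁)) (c 0) ≤ 14 * δ := by
    have h := dist_triangle (g (c T₁)) (g (g (c 0))) (c 0)
    rw [g.dist_eq] at h
    rw [dist_comm (c T₁) (g (c 0))] at h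
    linarith
  have hA2 : |u| ≤ s - T₁ + 16 * δ := by
    have h := dist_triangle4 (c u) (g (c s)) (g (c T₁)) (c 0)
    rw [hgsT, dist_comm (c u) (g (c s))] at h
    have hu0 : dist (c u) (c 0) = |u| := by rw [hc, sub_zero]
    rw [hu0] at h
    linarith
  rcases lt_or_ge u 0 with hu | hu
  · -- u negative : g (c s) is far from c s, contradicting hK
    have h1 : dist (c u) (c s) = s - u := by
      rw [hc, abs_of_nonpos (by linarith), neg_sub]
    have h2 := dist_triangle (c u) (g (c s)) (c s)
    rw [h1, dist_comm (c u) (g (c s))] at h2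
    have := hK s
    linarith
  · -- u nonnegative : forces 2 T₁ ≤ 20 δ
    rw [abs_of_nonneg hu] at hA2
    rcases abs_cases (u - T₁) with ⟨he, -⟩ | ⟨he, -⟩ <;> rw [he] at hA1 <;> linarith

end Aux4

set_option maxHeartbeats 1600000 in
/-- Same setting as the monotonicity lemma: `g` is an isometry of a proper geodesic
`δ`-hyperbolic space, `c` a geodesic line with `c(ℝ)` and `g(c(ℝ))` at Hausdorff distance
at most `2δ` and `dist (g (c s)) (c s)` uniformly bounded, `x = c 0` with
`t := dist (g x) x ≥ 20δ`, and `c (T i)` a nearest-point projection of `gⁱ x` onto `c(ℝ)`.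
Then `t - 4δ ≤ dist (c (T i)) (c (T (i+1))) ≤ t + 4δ` for every integer `i`, and
`dist (c (T n)) (c (T 0)) ≥ n (t - 4δ)` for every integer `n ≥ 1`. -/
theorem projections_distance_bounds {X : Type*} [MetricSpace X] [ProperSpace X]
    (δ : ℝ) (hδ : 0 ≤ δ) (hgeo : IsGeodesicSpace X) (hthin : DeltaThinTriangles X δ)
    (g : X ≃ᵢ X) (c : ℝ → X) (hc : IsGeodesicLine c)
    (hHaus : EMetric.hausdorffEdist (Set.range c) (⇑g '' Set.range c) ≤ ENNReal.ofReal (2 * δ))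
    (K : ℝ) (hK : ∀ s : ℝ, dist (g (c s)) (c s) ≤ K)
    (x : X) (hx : x = c 0) (t : ℝ) (ht : t = dist (g x) x) (hmove : t ≥ 20 * δ)
    (T : ℤ → ℝ) (hT : ∀ i : ℤ, IsNearestPointProj (Set.range c) ((g ^ i) x) (c (T i))) :
    (∀ i : ℤ, t - 4 * δ ≤ dist (c (T i)) (c (T (i + 1))) ∧
        dist (c (T i)) (c (T (i + 1))) ≤ t + 4 * δ) ∧
      ∀ n : ℤ, 1 ≤ n → (n : ℝ) * (t - 4 * δ) ≤ dist (c (T n)) (c (T 0)) := by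
  subst hx
  have hK0 : 0 ≤ K := le_trans dist_nonneg (hK 0)
  -- power application identities
  have hzpow1 : ∀ (i : ℤ) (y : X), (g ^ (i + 1)) y = (g ^ i) (g y) := by
    intro i y; rw [zpow_add_one]; rfl
  have hzpow2 : ∀ (i : ℤ) (y : X), (g ^ (i + 2)) y = (g ^ i) (g (g y)) := by
    intro i y
    rw [show i + 2 = i + 1 + 1 by ring, hzpow1 (i + 1) y, hzpow1 i (g y)]
  -- uniform displacement of points of the line under powers of g
  have hdispN : ∀ (n : ℕ) (s : ℝ), dist ((g ^ (n : ℤ)) (c s)) (c s) ≤ (n : ℝ) * K := by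
    intro n
    induction n with
    | zero => intro s; simp
    | succ m ih =>
      intro s
      have key : (g ^ (((m : ℤ)) + 1)) (c s) = g ((g ^ (m : ℤ)) (c s)) := by
        rw [show (m : ℤ) + 1 = 1 + (m : ℤ) by ring, zpow_add, zpow_one]; rfl
      have hcast : ((m + 1 : ℕ) : ℤ) = (m : ℤ) + 1 := by push_cast; ring
      rw [hcast, key]
      calc dist (g ((g ^ (m : ℤ)) (c s))) (c s)
          ≤ dist (g ((g ^ (m : ℤ)) (c s))) (g (c s)) + dist (g (c s)) (c s) :=
            dist_triangle _ _ _
        _ ≤ (m : ℝ) * K + K := by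
            rw [g.dist_eq]; exact add_le_add (ih s) (hK s)
        _ = ((m + 1 : ℕ) : ℝ) * K := by push_cast; ring
  have hdisp : ∀ (i : ℤ) (s : ℝ), dist ((g ^ i) (c s)) (c s) ≤ (i.natAbs : ℝ) * K := by
    intro i s
    rcases Int.natAbs_eq i with h | h
    · rw [h]; exact hdispN i.natAbs s
    · set n := i.natAbs with hn
      have e1 : (g ^ (n : ℤ)) ((g ^ i) (c s)) = c s := by
        rw [h, ← IsometryEquiv.mul_apply, ← zpow_add]
        simp
      calc dist ((g ^ i) (c s)) (c s)
          = dist ((g ^ (n : ℤ)) ((g ^ i) (c s))) ((g ^ (n : ℤ)) (c s)) :=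
            ((g ^ (n : ℤ)).dist_eq _ _).symm
        _ = dist ((g ^ (n : ℤ)) (c s)) (c s) := by rw [e1, dist_comm]
        _ ≤ (n : ℝ) * K := hdispN n s
  -- each gⁱ x is within 2δ of the line
  have hdi : ∀ i : ℤ, dist ((g ^ i) (c 0)) (c (T i)) ≤ 2 * δ := by
    intro i
    have hline' : IsGeodesicLine (fun s => (g ^ i) (c s)) := by
      intro s r; rw [(g ^ i).dist_eq, hc]
    have hinf : Metric.infDist ((g ^ i) (c 0)) (Set.range c) ≤ 2 * δ :=
      line_close hδ hgeo hthin hc hline' (H := (i.natAbs : ℝ) * K) (mul_nonneg (Nat.cast_nonneg _) hK0)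
        (fun s => le_trans (Metric.infDist_le_dist_of_mem (Set.mem_range_self s)) (hdisp i s))
    rw [(hT i).2]; exact hinf
  -- consecutive powers are at distance t
  have hstep : ∀ i : ℤ, dist ((g ^ i) (c 0)) ((g ^ (i + 1)) (c 0)) = t := by
    intro i
    rw [hzpow1 i (c 0), (g ^ i).dist_eq, ht, dist_comm]
  -- Part 1
  have part1 : ∀ i : ℤ, t - 4 * δ ≤ dist (c (T i)) (c (T (i + 1))) ∧
      dist (c (T i)) (c (T (i + 1))) ≤ t + 4 * δ := by
    intro i
    constructor
    · have h := dist_triangle4 ((g ^ i) (c 0)) (c (T i)) (c (T (i + 1))) ((g ^ (i + 1)) (c 0))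
      have h1 := hdi i
      have h2 := hdi (i + 1)
      have h3 := hstep i
      rw [dist_comm (c (T (i + 1))) ((g ^ (i + 1)) (c 0))] at h
      linarith
    · have hub1 := proj_ineq hδ hgeo hthin hc (hT i) (Set.mem_range_self (T (i + 1)))
      have hub2 := proj_ineq hδ hgeo hthin hc (hT (i + 1)) (Set.mem_range_self (T i))
      have htr1 : dist ((g ^ i) (c 0)) (c (T (i + 1)))
          ≤ dist ((g ^ i) (c 0)) ((g ^ (i + 1)) (c 0)) + dist ((g ^ (i + 1)) (c 0)) (c (T (i + 1))) :=
        dist_triangle _ _ _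
      have htr2 : dist ((g ^ (i + 1)) (c 0)) (c (T i))
          ≤ dist ((g ^ (i + 1)) (c 0)) ((g ^ i) (c 0)) + dist ((g ^ i) (c 0)) (c (T i)) :=
        dist_triangle _ _ _
      have hyy' : dist ((g ^ (i + 1)) (c 0)) ((g ^ i) (c 0)) = t := by
        rw [dist_comm]; exact hstep i
      rw [dist_comm (c (T (i + 1))) (c (T i))] at hub2
      rcases le_total (dist ((g ^ i) (c 0)) (c (T i)))
          (dist ((g ^ (i + 1)) (c 0)) (c (T (i + 1)))) with hle | hle
      · linarith [hstep i]
      · linarith [hstep i]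
  refine ⟨part1, ?_⟩
  intro n hn
  have hn1 : (1 : ℝ) ≤ (n : ℝ) := by exact_mod_cast hn
  rcases le_or_gt (t - 4 * δ) 0 with h4 | h4
  · calc (n : ℝ) * (t - 4 * δ) ≤ 0 :=
        mul_nonpos_of_nonneg_of_nonpos (by linarith) h4
    _ ≤ dist (c (T n)) (c (T 0)) := dist_nonneg
  -- main case : t - 4δ > 0
  set e : ℤ → ℝ := fun i => T (i + 1) - T i with he
  have habs : ∀ i : ℤ, t - 4 * δ ≤ |e i| ∧ |e i| ≤ t + 4 * δ := by
    intro i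
    have hD : dist (c (T i)) (c (T (i + 1))) = |e i| := by
      rw [hc, abs_sub_comm]
    rw [← hD]; exact part1 i
  have hne0 : ∀ i : ℤ, e i ≠ 0 := by
    intro i h
    have := (habs i).1
    rw [h, abs_zero] at this
    linarith
  -- sign flips are impossible
  have hcore : ∀ i : ℤ, |e i + e (i + 1)| ≤ 8 * δ → False := by
    intro i hsum
    have hsum' : e i + e (i + 1) = T (i + 2) - T i := by
      simp only [he]
      rw [show i + 1 + 1 = i + 2 by ring]
      ring
    have hTT : dist (c (T i)) (c (T (i + 2))) ≤ 8 * δ := by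
      rw [hc, show T i - T (i + 2) = -(e i + e (i + 1)) by rw [hsum']; ring, abs_neg]
      exact hsum
    have hgg2 : dist (g (g (c 0))) (c 0) ≤ 12 * δ := by
      have h := dist_triangle4 ((g ^ i) (c 0)) (c (T i)) (c (T (i + 2))) ((g ^ (i + 2)) (c 0))
      rw [dist_comm (c (T (i + 2))) ((g ^ (i + 2)) (c 0))] at h
      have h1 := hdi i
      have h2 := hdi (i + 2)
      have hEq : dist ((g ^ i) (c 0)) ((g ^ (i + 2)) (c 0)) = dist (g (g (c 0))) (c 0) := by
        rw [hzpow2 i (c 0), (g ^ i).dist_eq, dist_comm]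
      rw [hEq] at h
      linarith
    -- now use the no-flip lemma
    have hd1 : dist (g (c 0)) (c (T 1)) ≤ 2 * δ := by
      have h := hdi 1
      rwa [zpow_one] at h
    have habsT1 : t - 2 * δ ≤ |T 1| := by
      have h1 : dist (c 0) (c (T 1)) = |T 1| := by
        rw [hc, zero_sub, abs_neg]
      have h2 := dist_triangle (c 0) (c (T 1)) (g (c 0))
      rw [h1, dist_comm (c 0) (g (c 0)), ← ht, dist_comm (c (T 1)) (g (c 0))] at h2
      linarith
    have h12 : 12 * δ < t := by
      rcases eq_or_lt_of_le hδ with h | h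
      · rw [← h]; linarith
      · linarith
    rcases le_or_gt 0 (T 1) with hT1 | hT1
    · rw [abs_of_nonneg hT1] at habsT1
      exact no_flip hδ g hc hHaus hK hd1 (by linarith) hgg2
    · rw [abs_of_neg hT1] at habsT1
      have hc' : IsGeodesicLine (fun s => c (-s)) := by
        intro a b
        rw [hc, show -a - -b = -(a - b) by ring, abs_neg]
      have hrange : Set.range (fun s => c (-s)) = Set.range c := by
        ext y
        constructor
        · rintro ⟨s, rfl⟩; exact ⟨-s, rfl⟩
        · rintro ⟨s, rfl⟩; exact ⟨-s, by simp⟩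
      have hHaus' : EMetric.hausdorffEdist (Set.range (fun s => c (-s)))
          (⇑g '' Set.range (fun s => c (-s))) ≤ ENNReal.ofReal (2 * δ) := by
        rw [hrange]; exact hHaus
      have hK' : ∀ s : ℝ, dist (g ((fun s => c (-s)) s)) ((fun s => c (-s)) s) ≤ K :=
        fun s => hK (-s)
      have hd1' : dist (g ((fun s => c (-s)) 0)) ((fun s => c (-s)) (-(T 1))) ≤ 2 * δ := by
        simpa using hd1
      have hgg2' : dist (g (g ((fun s => c (-s)) 0))) ((fun s => c (-s)) 0) ≤ 12 * δ := by
        simpa using hgg2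
      exact no_flip hδ g hc' hHaus' hK' hd1' (by linarith) hgg2'
  have hsignstep : ∀ i : ℤ, 0 < e i → 0 < e (i + 1) := by
    intro i hi
    rcases lt_trichotomy (e (i + 1)) 0 with h | h | h
    · exfalso
      apply hcore i
      have h1 := habs i
      have h2 := habs (i + 1)
      rw [abs_of_pos hi] at h1
      rw [abs_of_neg h] at h2
      rw [abs_le]; constructor <;> linarith
    · exact absurd h (hne0 (i + 1))
    · exact h
  have hsignstep' : ∀ i : ℤ, e i < 0 → e (i + 1) < 0 := by
    intro i hi
    rcases lt_trichotomy (e (i + 1)) 0 with h | h | h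
    · exact h
    · exact absurd h (hne0 (i + 1))
    · exfalso
      apply hcore i
      have h1 := habs i
      have h2 := habs (i + 1)
      rw [abs_of_neg hi] at h1
      rw [abs_of_pos h] at h2
      rw [abs_le]; constructor <;> linarith
  -- sum up along the orbit
  have hn0 : (0 : ℤ) ≤ n := by linarith
  obtain ⟨k, rfl⟩ : ∃ k : ℕ, n = (k : ℤ) := ⟨n.toNat, (Int.toNat_of_nonneg hn0).symm⟩
  have hDk : dist (c (T (k : ℤ))) (c (T 0)) = |T (k : ℤ) - T 0| := by rw [hc]
  rcases lt_trichotomy (e 0) 0 with h0 | h0 | h0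
  · -- all increments negative
    have hneg : ∀ m : ℕ, e (m : ℤ) < 0 ∧ (m : ℝ) * (t - 4 * δ) ≤ T 0 - T (m : ℤ) := by
      intro m
      induction m with
      | zero => exact ⟨h0, by norm_num⟩
      | succ p ih =>
        have hcast : ((p + 1 : ℕ) : ℤ) = (p : ℤ) + 1 := by push_cast; ring
        have h2 := hsignstep' (p : ℤ) ih.1
        have hlow : t - 4 * δ ≤ -e (p : ℤ) := by
          have := (habs (p : ℤ)).1
          rw [abs_of_neg ih.1] at this
          exact this
        constructor
        · rw [hcast]; exact h2
        · rw [hcast]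
          have hexp : T ((p : ℤ) + 1) = e (p : ℤ) + T (p : ℤ) := by simp only [he]; ring
          have hexp2 : ((p : ℝ) + 1) * (t - 4 * δ) = (p : ℝ) * (t - 4 * δ) + (t - 4 * δ) := by
            ring
          push_cast
          rw [hexp, hexp2]
          linarith [ih.2]
    rw [hDk]
    calc ((k : ℤ) : ℝ) * (t - 4 * δ) = (k : ℝ) * (t - 4 * δ) := by push_cast; ring
    _ ≤ T 0 - T (k : ℤ) := (hneg k).2
    _ = -(T (k : ℤ) - T 0) := by ring
    _ ≤ |T (k : ℤ) - T 0| := neg_le_abs _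
  · exact absurd h0 (hne0 0)
  · -- all increments positive
    have hpos : ∀ m : ℕ, 0 < e (m : ℤ) ∧ (m : ℝ) * (t - 4 * δ) ≤ T (m : ℤ) - T 0 := by
      intro m
      induction m with
      | zero => exact ⟨h0, by norm_num⟩
      | succ p ih =>
        have hcast : ((p + 1 : ℕ) : ℤ) = (p : ℤ) + 1 := by push_cast; ring
        have h2 := hsignstep (p : ℤ) ih.1
        have hlow : t - 4 * δ ≤ e (p : ℤ) := by
          have := (habs (p : ℤ)).1
          rw [abs_of_pos ih.1] at this
          exact this
        constructor
        · rw [hcast]; exact h2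
        · rw [hcast]
          have hexp : T ((p : ℤ) + 1) = e (p : ℤ) + T (p : ℤ) := by simp only [he]; ring
          have hexp2 : ((p : ℝ) + 1) * (t - 4 * δ) = (p : ℝ) * (t - 4 * δ) + (t - 4 * δ) := by
            ring
          push_cast
          rw [hexp, hexp2]
          linarith [ih.2]
    rw [hDk]
    calc ((k : ℤ) : ℝ) * (t - 4 * δ) = (k : ℝ) * (t - 4 * δ) := by push_cast; ring
    _ ≤ T (k : ℤ) - T 0 := (hpos k).2
    _ ≤ |T (k : ℤ) - T 0| := le_abs_self _
end

section
/- Let Y be a proper metric space and let G be a group acting properly discontinuously and cocompactly by isometries on Y, and let C ≥ 0 be a real number. Then there exists a positive integer k₁ with the following property: for every element γ ∈ G of infinite order and every x ∈ Y, there is an integer k with 1 ≤ k ≤ k₁ such that d(γᵏ·x, x) ≥ C. -/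
open Pointwise

/-- The group `G` acts on the metric space `Y` by isometries. -/
def IsIsometricAction (G Y : Type*) [Group G] [MulAction G Y] [MetricSpace Y] : Prop :=
  ∀ g : G, Isometry (fun y : Y => g • y)

/-- The action of `G` on `Y` is properly discontinuous: for every compact `K ⊆ Y`,
the set of `g ∈ G` with `g • K ∩ K ≠ ∅` is finite. -/
def IsProperlyDiscontinuousAction (G Y : Type*) [Group G] [MulAction G Y]
    [TopologicalSpace Y] : Prop :=
  ∀ K : Set Y, IsCompact K → {g : G | (g • K ∩ K).Nonempty}.Finite

/-- The action of `G` on `Y` is cocompact: there is a compact `K ⊆ Y` with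
`⋃ g, g • K = Y`. -/
def IsCocompactAction (G Y : Type*) [Group G] [MulAction G Y] [TopologicalSpace Y] : Prop :=
  ∃ K : Set Y, IsCompact K ∧ ⋃ g : G, g • K = Set.univ

/-!
Fix a compact `K` whose translates cover `Y`. By proper discontinuity only finitely many
`g ∈ G`, say `N` of them, move some point of `K` by at most `C`. Write `x = g • y` with `y ∈ K`;
then `dist (γ ^ k • x) x = dist ((g⁻¹ * γ ^ k * g) • y) y`, and for `γ` of infinite order the
`N + 1` conjugates `g⁻¹ * γ ^ k * g`, `1 ≤ k ≤ N + 1`, are distinct, so one of them is not among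
those `N` elements. Hence `k₁ = N + 1` works.
-/

theorem IsProperlyDiscontinuousAction.finite_setOf_exists_dist_smul_le {G Y : Type*} [Group G]
    [MetricSpace Y] [ProperSpace Y] [MulAction G Y] (hpd : IsProperlyDiscontinuousAction G Y)
    {K : Set Y} (hK : IsCompact K) (C : ℝ) :
    {g : G | ∃ y ∈ K, dist (g • y) y ≤ C}.Finite := by
  refine (hpd _ (hK.cthickening (r := C))).subset ?_
  rintro g ⟨y, hyK, hy⟩
  exact ⟨g • y, Set.smul_mem_smul_set (Metric.self_subset_cthickening K hyK),
    Metric.mem_cthickening_of_dist_le _ y C K hyK hy⟩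

theorem IsIsometricAction.dist_conj_smul {G Y : Type*} [Group G] [MetricSpace Y]
    [MulAction G Y] (hiso : IsIsometricAction G Y) (g h : G) (y : Y) :
    dist ((g⁻¹ * h * g) • y) y = dist (h • g • y) (g • y) := by
  rw [← (hiso g).dist_eq, smul_smul, smul_smul, ← mul_assoc, ← mul_assoc, mul_inv_cancel,
    one_mul]

theorem exists_smul_eq_of_iUnion_smul_eq_univ {G Y : Type*} [Group G] [MulAction G Y]
    {K : Set Y} (hcover : ⋃ g : G, g • K = Set.univ) (x : Y) :
    ∃ g : G, ∃ y ∈ K, g • y = x := by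
  have hx : x ∈ ⋃ g : G, g • K := hcover ▸ Set.mem_univ x
  simpa only [Set.mem_iUnion, Set.mem_smul_set] using hx

theorem exists_conj_pow_notMem {G : Type*} [Group G] {F : Set G} (hF : F.Finite) {γ : G}
    (hγ : ¬IsOfFinOrder γ) (g : G) :
    ∃ k ∈ Set.Icc 1 (F.ncard + 1), g⁻¹ * γ ^ k * g ∉ F := by
  by_contra! hmaps
  have hinj : Function.Injective fun k : ℕ => g⁻¹ * γ ^ k * g :=
    (mul_left_injective g).comp ((mul_right_injective g⁻¹).comp
      (injective_pow_iff_not_isOfFinOrder.mpr hγ))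
  have hcard := Set.ncard_le_ncard_of_injOn _ hmaps hinj.injOn hF
  simp at hcard

theorem infinite_order_moves_far_general {G Y : Type*} [Group G] [MetricSpace Y]
    [ProperSpace Y] [MulAction G Y]
    (hiso : IsIsometricAction G Y) (hpd : IsProperlyDiscontinuousAction G Y)
    (hcc : IsCocompactAction G Y) (C : ℝ) :
    ∃ k₁ : ℕ, 0 < k₁ ∧ ∀ γ : G, (∀ n : ℤ, n ≠ 0 → γ ^ n ≠ 1) → ∀ x : Y,
      ∃ k : ℕ, 1 ≤ k ∧ k ≤ k₁ ∧ C ≤ dist ((γ ^ k) • x) x := by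
  obtain ⟨K, hK, hcover⟩ := hcc
  set F := {g : G | ∃ y ∈ K, dist (g • y) y ≤ C}
  refine ⟨F.ncard + 1, Nat.succ_pos _, fun γ hγ x => ?_⟩
  have hγ' : ¬IsOfFinOrder γ := by
    simpa [isOfFinOrder_iff_zpow_eq_one] using hγ
  obtain ⟨g, y, hyK, rfl⟩ := exists_smul_eq_of_iUnion_smul_eq_univ hcover x
  obtain ⟨k, ⟨hk1, hk⟩, hkF⟩ :=
    exists_conj_pow_notMem (hpd.finite_setOf_exists_dist_smul_le hK C) hγ' g
  refine ⟨k, hk1, hk, ?_⟩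
  rw [← hiso.dist_conj_smul]
  exact (not_le.mp fun hle => hkF ⟨y, hyK, hle⟩).le

/-- If a group `G` acts properly discontinuously and cocompactly by isometries on a proper
metric space `Y` and `C ≥ 0`, then there is a positive integer `k₁` such that for every
infinite-order `γ ∈ G` and every `x ∈ Y` there is `1 ≤ k ≤ k₁` with `dist (γᵏ • x) x ≥ C`. -/
theorem infinite_order_moves_far {G Y : Type*} [Group G] [MetricSpace Y]
    [ProperSpace Y] [MulAction G Y]
    (hiso : IsIsometricAction G Y) (hpd : IsProperlyDiscontinuousAction G Y)
    (hcc : IsCocompactAction G Y) (C : ℝ) (hC : 0 ≤ C) :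
    ∃ k₁ : ℕ, 0 < k₁ ∧ ∀ γ : G, (∀ n : ℤ, n ≠ 0 → γ ^ n ≠ 1) → ∀ x : Y,
      ∃ k : ℕ, 1 ≤ k ∧ k ≤ k₁ ∧ C ≤ dist ((γ ^ k) • x) x :=
  infinite_order_moves_far_general hiso hpd hcc C
end

section
/- Let Y be a proper metric space, let G be an infinite group acting properly discontinuously and cocompactly by isometries on Y, and let C ≥ 0 be a real number. Then there exists a positive integer n₀ with the following property: for every finite generating set S of G and every x ∈ Y, there is an element g ∈ G whose word length with respect to S is at most n₀ and which satisfies d(g·x, x) > C. -/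
/-!
Write `x = h • k` with `k` in a compact set `K` whose translates cover `Y`. An element moving `x`
by at most `C` is the `h`-conjugate of one moving `k` by at most `C`, and such an element does not
move `cthickening C K` off itself; by proper discontinuity there are at most `N` of those, with `N`
independent of `x`. On the other hand, in an infinite group the word balls of any generating set
strictly increase until they exhaust the group, so the ball of radius `N` has more than `N`
elements, and one of them moves `x` by more than `C`.
-/

open Pointwise

open Metric

section WordBall

variable {G : Type*} [Group G] (S : Set G)

def wordBall (n : ℕ) : Set G := {g | ∃ m ≤ n, g ∈ (S ∪ S⁻¹) ^ m}

variable {S}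

lemma one_mem_wordBall (n : ℕ) : (1 : G) ∈ wordBall S n :=
  ⟨0, n.zero_le, by simp⟩

lemma wordBall_mono : Monotone (wordBall S) :=
  fun _ _ hmn _ ⟨m, hm, hg⟩ => ⟨m, hm.trans hmn, hg⟩

lemma mul_mem_wordBall_succ {n : ℕ} {g s : G} (hg : g ∈ wordBall S n) (hs : s ∈ S ∪ S⁻¹) :
    g * s ∈ wordBall S (n + 1) := by
  obtain ⟨m, hm, hgm⟩ := hg
  exact ⟨m + 1, by omega, by rw [pow_succ]; exact Set.mul_mem_mul hgm hs⟩

lemma wordBall_eq_univ_of_succ_subset (hS : Subgroup.closure S = ⊤) {n : ℕ}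
    (h : wordBall S (n + 1) ⊆ wordBall S n) : wordBall S n = Set.univ :=
  Set.eq_univ_of_forall fun g =>
    Subgroup.closure_induction_right (p := fun g _ => g ∈ wordBall S n) (one_mem_wordBall n)
      (fun _ _ _ hs hg => h (mul_mem_wordBall_succ hg (Or.inl hs)))
      (fun _ _ _ hs hg => h (mul_mem_wordBall_succ hg (Or.inr (Set.inv_mem_inv.2 hs))))
      (hS ▸ Subgroup.mem_top g)

lemma natCast_lt_encard_wordBall [Infinite G] (hS : Subgroup.closure S = ⊤) (n : ℕ) :
    (n : ℕ∞) < (wordBall S n).encard := by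
  induction n with
  | zero => simpa using ⟨1, one_mem_wordBall 0⟩
  | succ n ih =>
    by_cases hsat : wordBall S (n + 1) ⊆ wordBall S n
    · have hball := wordBall_eq_univ_of_succ_subset hS hsat
      rw [Set.eq_univ_of_univ_subset (hball.symm.subset.trans (wordBall_mono n.le_succ))]
      simp
    · obtain ⟨g, hg_succ, hg⟩ := Set.not_subset.1 hsat
      calc ((n + 1 : ℕ) : ℕ∞) < (wordBall S n).encard + 1 := by
            push_cast; exact (ENat.add_lt_add_iff_right ENat.one_ne_top).2 ih
        _ = (insert g (wordBall S n)).encard := (Set.encard_insert_of_notMem hg).symm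
        _ ≤ (wordBall S (n + 1)).encard :=
            Set.encard_le_encard (Set.insert_subset hg_succ (wordBall_mono n.le_succ))

lemma wordBall_not_subset_of_encard_le [Infinite G] (hS : Subgroup.closure S = ⊤) {n : ℕ}
    {F : Set G} (hF : F.encard ≤ n) : ¬ wordBall S n ⊆ F :=
  fun hsub => (natCast_lt_encard_wordBall hS n).not_ge ((Set.encard_le_encard hsub).trans hF)

end WordBall

section Displacement

variable {G Y : Type*} [Group G] [MulAction G Y] [MetricSpace Y]

lemma IsIsometricAction.displacement_subset_conj (hiso : IsIsometricAction G Y) {K : Set Y}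
    {k : Y} (hk : k ∈ K) (h : G) (C : ℝ) :
    {g : G | dist (g • h • k) (h • k) ≤ C} ⊆
      (fun g => h * g * h⁻¹) '' {g | (g • cthickening C K ∩ cthickening C K).Nonempty} := by
  intro g hg
  have hdist : dist ((h⁻¹ * g * h) • k) k ≤ C := by
    rwa [← (hiso h).dist_eq, ← mul_smul, mul_assoc, mul_inv_cancel_left, mul_smul]
  refine ⟨h⁻¹ * g * h, ⟨(h⁻¹ * g * h) • k, Set.smul_mem_smul_set (self_subset_cthickening K hk),
    mem_cthickening_of_dist_le _ k C K hk hdist⟩, by group⟩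

lemma exists_encard_displacement_le [ProperSpace Y] (hiso : IsIsometricAction G Y)
    (hpd : IsProperlyDiscontinuousAction G Y) (hcc : IsCocompactAction G Y) (C : ℝ) :
    ∃ N : ℕ, ∀ x : Y, {g : G | dist (g • x) x ≤ C}.encard ≤ N := by
  obtain ⟨K, hK, hKcover⟩ := hcc
  set Φ := {g : G | (g • cthickening C K ∩ cthickening C K).Nonempty}
  have hΦ : Φ.Finite := hpd _ hK.cthickening
  refine ⟨Φ.ncard, fun x => ?_⟩
  obtain ⟨h, k, hk, rfl⟩ := Set.mem_iUnion.1 (hKcover ▸ Set.mem_univ x : x ∈ ⋃ g : G, g • K)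
  calc _ ≤ _ := Set.encard_le_encard (hiso.displacement_subset_conj hk h C)
    _ ≤ _ := Set.encard_image_le _ _
    _ = _ := hΦ.cast_ncard_eq.symm

end Displacement

theorem short_element_moves_far_general {G Y : Type*} [Group G] [Infinite G] [MetricSpace Y]
    [ProperSpace Y] [MulAction G Y]
    (hiso : IsIsometricAction G Y) (hpd : IsProperlyDiscontinuousAction G Y)
    (hcc : IsCocompactAction G Y) (C : ℝ) :
    ∃ n₀ : ℕ, 0 < n₀ ∧ ∀ S : Set G, S.Finite → Subgroup.closure S = ⊤ → ∀ x : Y,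
      ∃ g : G, (∃ n : ℕ, n ≤ n₀ ∧ g ∈ (S ∪ S⁻¹) ^ n) ∧ C < dist (g • x) x := by
  obtain ⟨N, hN⟩ := exists_encard_displacement_le hiso hpd hcc C
  refine ⟨N + 1, N.succ_pos, fun S _ hS x => ?_⟩
  obtain ⟨g, ⟨m, hm, hgm⟩, hg⟩ := Set.not_subset.1 (wordBall_not_subset_of_encard_le hS (hN x))
  exact ⟨g, ⟨m, hm.trans N.le_succ, hgm⟩, not_le.1 hg⟩

/-- If an infinite group `G` acts properly discontinuously and cocompactly by isometries on
a proper metric space `Y` and `C ≥ 0`, then there is a positive integer `n₀` such that for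
every finite generating set `S` of `G` and every `x ∈ Y` there is an element `g ∈ G` of word
length at most `n₀` with respect to `S` (i.e. a product of at most `n₀` elements of
`S ∪ S⁻¹`) satisfying `dist (g • x) x > C`. -/
theorem short_element_moves_far {G Y : Type*} [Group G] [Infinite G] [MetricSpace Y]
    [ProperSpace Y] [MulAction G Y]
    (hiso : IsIsometricAction G Y) (hpd : IsProperlyDiscontinuousAction G Y)
    (hcc : IsCocompactAction G Y) (C : ℝ) (hC : 0 ≤ C) :
    ∃ n₀ : ℕ, 0 < n₀ ∧ ∀ S : Set G, S.Finite → Subgroup.closure S = ⊤ → ∀ x : Y,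
      ∃ g : G, (∃ n : ℕ, n ≤ n₀ ∧ g ∈ (S ∪ S⁻¹) ^ n) ∧ C < dist (g • x) x :=
  short_element_moves_far_general hiso hpd hcc C
end

section
/- Let δ ≥ 0 and let X be a proper geodesic δ-hyperbolic metric space. Let c and c' be geodesic lines in X whose images are at Hausdorff distance at most 2δ from each other. Let y' ∈ X, let z' be a nearest-point projection of y' onto the image of c', and let y'' and z'' be nearest-point projections of y' and of z', respectively, onto the image of c. Then d(y'', z'') ≤ 13δ. -/
/-!
Projecting `y'` to a geodesic line and then moving along it costs at most `4δ` compared with a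
straight path: if `y''` is a nearest point of `c` to `y'` and `z''` lies on `c`, then
`d(y', y'') + d(y'', z'') ≤ d(y', z'') + 4δ`, by thinness of the triangle `y'' y' z''` whose side
`[y'', z'']` runs along `c`. The Hausdorff bound gives `d(y', z'') ≤ d(y', z') + d(z', z'') ≤
(d(y', y'') + 2δ) + 2δ`, so `d(y'', z'') ≤ 8δ`.
-/

open Metric Set

section

variable {X : Type*} [MetricSpace X]

namespace IsGeodesicSegmentBetween

variable {s : Set X} {p q : X}

lemma left_mem (h : IsGeodesicSegmentBetween s p q) : p ∈ s := by
  obtain ⟨f, hf0, -, rfl, -⟩ := h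
  exact ⟨0, ⟨le_rfl, dist_nonneg⟩, hf0⟩

lemma right_mem (h : IsGeodesicSegmentBetween s p q) : q ∈ s := by
  obtain ⟨f, -, hfq, rfl, -⟩ := h
  exact ⟨dist p q, ⟨dist_nonneg, le_rfl⟩, hfq⟩

lemma exists_continuousOn_image_eq (h : IsGeodesicSegmentBetween s p q) :
    ∃ f : ℝ → X, ContinuousOn f (Icc 0 (dist p q)) ∧ s = f '' Icc 0 (dist p q) := by
  obtain ⟨f, -, -, hs, hiso⟩ := h
  refine ⟨f, ?_, hs⟩
  refine (LipschitzOnWith.of_dist_le_mul fun u hu v hv => ?_).continuousOn (K := 1)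
  rw [hiso u hu v hv, Real.dist_eq, NNReal.coe_one, one_mul]

lemma isCompact (h : IsGeodesicSegmentBetween s p q) : IsCompact s := by
  obtain ⟨f, hf, rfl⟩ := h.exists_continuousOn_image_eq
  exact isCompact_Icc.image_of_continuousOn hf

lemma isPreconnected (h : IsGeodesicSegmentBetween s p q) : IsPreconnected s := by
  obtain ⟨f, hf, rfl⟩ := h.exists_continuousOn_image_eq
  exact isPreconnected_Icc.image f hf

lemma dist_add_dist_of_mem (h : IsGeodesicSegmentBetween s p q) {u : X} (hu : u ∈ s) :
    dist p u + dist u q = dist p q := by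
  obtain ⟨f, hf0, hfq, rfl, hiso⟩ := h
  obtain ⟨t, ht, rfl⟩ := hu
  have hq : dist p q ∈ Icc 0 (dist p q) := ⟨dist_nonneg, le_rfl⟩
  have hpt : dist p (f t) = t := by
    rw [← hf0, hiso 0 ⟨le_rfl, dist_nonneg⟩ t ht, zero_sub, abs_neg, abs_of_nonneg ht.1]
  have htq : dist (f t) q = dist p q - t := by
    conv_lhs => rw [← hfq]
    rw [hiso t ht _ hq, abs_of_nonpos (sub_nonpos.2 ht.2), neg_sub]
  rw [hpt, htq, add_sub_cancel]

end IsGeodesicSegmentBetween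

namespace IsGeodesicLine

variable {c : ℝ → X}

lemma comp_neg (hc : IsGeodesicLine c) : IsGeodesicLine fun t => c (-t) := fun s t => by
  rw [hc, ← abs_neg, neg_sub_neg, neg_sub]

lemma exists_segment_subset_range_of_le (hc : IsGeodesicLine c) {a b : ℝ} (hab : a ≤ b) :
    ∃ s ⊆ range c, IsGeodesicSegmentBetween s (c a) (c b) := by
  have hdist : dist (c a) (c b) = b - a := by rw [hc, abs_sub_comm, abs_of_nonneg (by linarith)]
  refine ⟨_, ?_, fun t => c (a + t), by simp, by simp [hdist], rfl,
    fun u _ v _ => by rw [hc, add_sub_add_left_eq_sub]⟩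
  rintro _ ⟨t, -, rfl⟩
  exact ⟨a + t, rfl⟩

lemma exists_segment_subset_range (hc : IsGeodesicLine c) (a b : ℝ) :
    ∃ s ⊆ range c, IsGeodesicSegmentBetween s (c a) (c b) := by
  rcases le_total a b with hab | hba
  · exact hc.exists_segment_subset_range_of_le hab
  · obtain ⟨s, hs, hseg⟩ := hc.comp_neg.exists_segment_subset_range_of_le (neg_le_neg hba)
    rw [neg_neg, neg_neg] at hseg
    exact ⟨s, hs.trans (range_comp_subset_range _ c), hseg⟩

end IsGeodesicLine

lemma Metric.infDist_le_of_hausdorffEDist_le {s t : Set X} {r : ℝ} (hr : 0 ≤ r)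
    (h : hausdorffEDist s t ≤ ENNReal.ofReal r) {x : X} (hx : x ∈ s) : infDist x t ≤ r :=
  ENNReal.toReal_le_of_le_ofReal hr ((infEDist_le_hausdorffEDist_of_mem hx).trans h)

namespace DeltaThinTriangles

variable {δ : ℝ}

/-- The two closed `δ`-neighbourhoods cover the connected side `s₃` and contain one endpoint each,
so they meet on `s₃`. -/
lemma exists_close_to_both_sides (hthin : DeltaThinTriangles X δ) (hδ : 0 ≤ δ)
    {p q r : X} {s₁ s₂ s₃ : Set X} (h₁ : IsGeodesicSegmentBetween s₁ p q)
    (h₂ : IsGeodesicSegmentBetween s₂ q r) (h₃ : IsGeodesicSegmentBetween s₃ p r) :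
    ∃ m ∈ s₃, ∃ u ∈ s₁, ∃ v ∈ s₂, dist m u ≤ δ ∧ dist m v ≤ δ := by
  have hcover : s₃ ⊆ cthickening δ s₁ ∪ cthickening δ s₂ := by
    intro x hx
    obtain ⟨w, hw, hxw⟩ := (h₁.isCompact.union h₂.isCompact).exists_infDist_eq_dist
      ⟨p, .inl h₁.left_mem⟩ x
    rw [← cthickening_union]
    exact mem_cthickening_of_dist_le x w δ _ hw (hxw ▸ hthin p q r s₁ s₂ s₃ h₁ h₂ h₃ x hx)
  obtain ⟨m, hm₃, hm₁, hm₂⟩ := isPreconnected_closed_iff.1 h₃.isPreconnected _ _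
    isClosed_cthickening isClosed_cthickening hcover
    ⟨p, h₃.left_mem, self_subset_cthickening _ h₁.left_mem⟩
    ⟨r, h₃.right_mem, self_subset_cthickening _ h₂.right_mem⟩
  rw [h₁.isCompact.cthickening_eq_biUnion_closedBall hδ, mem_iUnion₂] at hm₁
  rw [h₂.isCompact.cthickening_eq_biUnion_closedBall hδ, mem_iUnion₂] at hm₂
  obtain ⟨u, hu, hmu⟩ := hm₁
  obtain ⟨v, hv, hmv⟩ := hm₂
  exact ⟨m, hm₃, u, hu, v, hv, hmu, hmv⟩

lemma dist_add_dist_le_of_isNearestPointProj (hthin : DeltaThinTriangles X δ) (hδ : 0 ≤ δ)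
    (hgeo : IsGeodesicSpace X) {A : Set X} {x p q : X} (hp : IsNearestPointProj A x p)
    {s : Set X} (hsA : s ⊆ A) (hs : IsGeodesicSegmentBetween s p q) :
    dist x p + dist p q ≤ dist x q + 4 * δ := by
  obtain ⟨s₁, h₁⟩ := hgeo p x
  obtain ⟨s₂, h₂⟩ := hgeo x q
  obtain ⟨m, hm, u, hu, v, hv, hmu, hmv⟩ := hthin.exists_close_to_both_sides hδ h₁ h₂ hs
  have hxp : dist x p ≤ dist x m := hp.2 ▸ infDist_le_dist_of_mem (hsA hm)
  have hpux := h₁.dist_add_dist_of_mem hu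
  have hxvq := h₂.dist_add_dist_of_mem hv
  have hpq : dist p q ≤ dist p u + dist u m + dist m v + dist v q := by
    linarith [dist_triangle4 p u m v, dist_triangle p v q]
  have hxm₁ : dist x m ≤ dist u x + dist m u := by
    linarith [dist_triangle x u m, dist_comm x u, dist_comm u m]
  have hxm₂ : dist x m ≤ dist x v + dist m v := by
    linarith [dist_triangle x v m, dist_comm v m]
  linarith [dist_comm p x, dist_comm u m]

end DeltaThinTriangles

end

theorem projections_close_general {X : Type*} [MetricSpace X]
    (δ : ℝ) (hδ : 0 ≤ δ) (hgeo : IsGeodesicSpace X) (hthin : DeltaThinTriangles X δ)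
    (c c' : ℝ → X) (hc : IsGeodesicLine c)
    (hHaus : EMetric.hausdorffEdist (Set.range c) (Set.range c') ≤ ENNReal.ofReal (2 * δ))
    (y' z' y'' z'' : X)
    (hz' : IsNearestPointProj (Set.range c') y' z')
    (hy'' : IsNearestPointProj (Set.range c) y' y'')
    (hz'' : IsNearestPointProj (Set.range c) z' z'') :
    dist y'' z'' ≤ 13 * δ := by
  have h2δ : 0 ≤ 2 * δ := by linarith
  obtain ⟨a, rfl⟩ := hy''.1
  obtain ⟨b, rfl⟩ := hz''.1
  obtain ⟨s, hsc, hs⟩ := hc.exists_segment_subset_range a b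
  have hproj := hthin.dist_add_dist_le_of_isNearestPointProj hδ hgeo hy'' hsc hs
  have hy'z' : dist y' z' ≤ dist y' (c a) + 2 * δ := by
    rw [hz'.2]
    linarith [infDist_le_infDist_add_dist (x := y') (y := c a) (s := range c'),
      infDist_le_of_hausdorffEDist_le h2δ hHaus (mem_range_self a)]
  have hz'z'' : dist z' (c b) ≤ 2 * δ := hz''.2 ▸
    infDist_le_of_hausdorffEDist_le h2δ (hausdorffEDist_comm.trans_le hHaus) hz'.1
  linarith [dist_triangle y' z' (c b)]

/-- Let `c` and `c'` be geodesic lines in a proper geodesic `δ`-hyperbolic space whose images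
are at Hausdorff distance at most `2δ`. Let `y' ∈ X`, let `z'` be a nearest-point projection
of `y'` onto the image of `c'`, and let `y''` and `z''` be nearest-point projections of `y'`
and of `z'` onto the image of `c`. Then `dist y'' z'' ≤ 13δ`. -/
theorem projections_close {X : Type*} [MetricSpace X] [ProperSpace X]
    (δ : ℝ) (hδ : 0 ≤ δ) (hgeo : IsGeodesicSpace X) (hthin : DeltaThinTriangles X δ)
    (c c' : ℝ → X) (hc : IsGeodesicLine c) (hc' : IsGeodesicLine c')
    (hHaus : EMetric.hausdorffEdist (Set.range c) (Set.range c') ≤ ENNReal.ofReal (2 * δ))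
    (y' z' y'' z'' : X)
    (hz' : IsNearestPointProj (Set.range c') y' z')
    (hy'' : IsNearestPointProj (Set.range c) y' y'')
    (hz'' : IsNearestPointProj (Set.range c) z' z'') :
    dist y'' z'' ≤ 13 * δ :=
  projections_close_general δ hδ hgeo hthin c c' hc hHaus y' z' y'' z'' hz' hy'' hz''
end
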